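/- Let (X, φ) be a metric space, γ > 0, L > 0, let F be any class of functions X → ℝ, and let F(L) ⊆ F be its members with Lipschitz constant at most L. Then: (i) for every finite labelled sample S ∈ (X × {−1,1})^n, err(F^{0/1}(L/2γ), S) ≤ err^γ(F(L), S); and (ii) for every probability distribution D on X × {−1,1} and every n ∈ ℕ, err*(F^{0/1}(L/2γ), D, n) ≤ err^γ(F(L), D), and consequently err*(F^{0/1}(L/2γ), D) ≤ err^γ(F(L), D). -/

import Mathlib

/-! For an `L`-Lipschitz `f ∈ F`, take the partial concept that is `sign f` where `|f| ≥ γ` and `⋆`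
elsewhere. Two points with opposite labels have `|f x₁ - f x₂| ≥ 2γ`, hence lie at distance at
least `2γ/L`, so this concept belongs to `F^{0/1}(L/2γ)`; and it labels correctly every sample
point of margin at least `γ`. This bounds the empirical error on every sample, and taking
expectations over `S ∼ Dⁿ` turns the empirical margin error into `err^γ(f, D)`. -/

open MeasureTheory

namespace Stmt11

variable {X : Type*}

/-- Encoding of a `{−1,1}` label by a Bool: `true ↦ 1`, `false ↦ −1`. -/
def ssign (b : Bool) : ℝ := if b then 1 else -1

/-- `f` has Lipschitz constant at most `L`. -/
def LipBound [MetricSpace X] (L : ℝ) (f : X → ℝ) : Prop :=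
  ∀ x y : X, |f x - f y| ≤ L * dist x y

/-- The partial class `F^{0/1}(L/2γ)`: signs of members of `F`, with opposite labels
allowed only at distance at least `2γ/L`. -/
def signClass [MetricSpace X] (F : Set (X → ℝ)) (γ L : ℝ) : Set (X → Option Bool) :=
  {h | (∃ f ∈ F, ∀ x : X, ∀ b : Bool, h x = some b → b = decide (0 ≤ f x)) ∧
    ∀ x₁ x₂ : X, ∀ b₁ b₂ : Bool,
      h x₁ = some b₁ → h x₂ = some b₂ → dist x₁ x₂ < 2 * γ / L → b₁ = b₂}

/-- Empirical error of a partial concept on a labelled sample (⋆ counts as an error). -/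
noncomputable def errPList (h : X → Option Bool) (S : List (X × Bool)) : ℝ :=
  (S.map fun p => if h p.1 = some p.2 then (0 : ℝ) else 1).sum / S.length

/-- Empirical error of a partial concept class (infimum over members). -/
noncomputable def errClassList (H : Set (X → Option Bool)) (S : List (X × Bool)) : ℝ :=
  ⨅ h : H, errPList (h : X → Option Bool) S

/-- Empirical `γ`-margin error of a real-valued function. -/
noncomputable def errMarginList (γ : ℝ) (f : X → ℝ) (S : List (X × Bool)) : ℝ :=
  (S.map fun p => if ssign p.2 * f p.1 < γ then (1 : ℝ) else 0).sum / S.length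

/-- `γ`-margin error of a real-valued function with respect to a distribution. -/
noncomputable def errMarginD [MeasurableSpace X] (γ : ℝ) (f : X → ℝ)
    (D : Measure (X × Bool)) : ℝ :=
  (D {p | ssign p.2 * f p.1 < γ}).toReal

/-- `err*(H', D, n) = E_{S∼D^n}[min_{h∈H'} err(h,S)]`. -/
noncomputable def errStar [MeasurableSpace X] (H : Set (X → Option Bool))
    (D : Measure (X × Bool)) (n : ℕ) : ℝ :=
  ∫ S, errClassList H (List.ofFn S) ∂(Measure.pi fun _ : Fin n => D)

noncomputable def marginConcept (γ : ℝ) (f : X → ℝ) : X → Option Bool :=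
  fun x => if γ ≤ |f x| then some (decide (0 ≤ f x)) else none

lemma marginConcept_eq_some_iff {γ : ℝ} (hγ : 0 < γ) {f : X → ℝ} {x : X} {b : Bool} :
    marginConcept γ f x = some b ↔ γ ≤ ssign b * f x := by
  unfold marginConcept
  rcases le_or_gt 0 (f x) with hx | hx
  · cases b
    · simp [ssign, hx]; linarith
    · simp [ssign, hx, abs_of_nonneg]
  · cases b
    · simp [ssign, hx.not_ge, abs_of_neg hx]
    · simp [ssign, hx.not_ge]; linarith

lemma ssign_ne {b₁ b₂ : Bool} (h : b₁ ≠ b₂) : ssign b₂ = -ssign b₁ := by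
  cases b₁ <;> cases b₂ <;> simp_all [ssign]

lemma marginConcept_mem_signClass [MetricSpace X] {γ L : ℝ} (hγ : 0 < γ) (hL : 0 < L)
    {F : Set (X → ℝ)} {f : X → ℝ} (hf : f ∈ F) (hlip : LipBound L f) :
    marginConcept γ f ∈ signClass F γ L := by
  refine ⟨⟨f, hf, fun x b hb => ?_⟩, fun x₁ x₂ b₁ b₂ h₁ h₂ hd => ?_⟩
  · unfold marginConcept at hb
    split_ifs at hb
    exact (Option.some_injective _ hb).symm
  · by_contra hne
    rw [marginConcept_eq_some_iff hγ] at h₁ h₂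
    rw [ssign_ne hne] at h₂
    have hsep : 2 * γ ≤ |f x₁ - f x₂| :=
      calc 2 * γ ≤ ssign b₁ * (f x₁ - f x₂) := by linarith
        _ ≤ |ssign b₁ * (f x₁ - f x₂)| := le_abs_self _
        _ = |f x₁ - f x₂| := by cases b₁ <;> simp [ssign, abs_sub_comm]
    have hclose : L * dist x₁ x₂ < 2 * γ := (lt_div_iff₀' hL).mp hd
    linarith [hlip x₁ x₂]

lemma errPList_marginConcept_le {γ : ℝ} (hγ : 0 < γ) (f : X → ℝ) (S : List (X × Bool)) :
    errPList (marginConcept γ f) S ≤ errMarginList γ f S := by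
  refine div_le_div_of_nonneg_right (List.sum_le_sum fun p _ => ?_) (Nat.cast_nonneg _)
  have := (marginConcept_eq_some_iff hγ (f := f) (x := p.1) (b := p.2)).not
  split_ifs <;> simp_all

lemma errPList_nonneg (h : X → Option Bool) (S : List (X × Bool)) : 0 ≤ errPList h S :=
  div_nonneg (List.sum_nonneg fun x hx => by
    obtain ⟨p, -, rfl⟩ := List.mem_map.mp hx
    split_ifs <;> norm_num) (Nat.cast_nonneg _)

lemma errClassList_nonneg (H : Set (X → Option Bool)) (S : List (X × Bool)) :
    0 ≤ errClassList H S :=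
  Real.iInf_nonneg fun h => errPList_nonneg h S

lemma errClassList_le_errPList {H : Set (X → Option Bool)} {h : X → Option Bool} (hh : h ∈ H)
    (S : List (X × Bool)) : errClassList H S ≤ errPList h S :=
  ciInf_le ⟨0, by rintro _ ⟨g, rfl⟩; exact errPList_nonneg g S⟩ (⟨h, hh⟩ : H)

lemma errClassList_signClass_le [MetricSpace X] {γ L : ℝ} (hγ : 0 < γ) (hL : 0 < L)
    {F : Set (X → ℝ)} {f : X → ℝ} (hf : f ∈ F) (hlip : LipBound L f) (S : List (X × Bool)) :
    errClassList (signClass F γ L) S ≤ errMarginList γ f S :=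
  (errClassList_le_errPList (marginConcept_mem_signClass hγ hL hf hlip) S).trans
    (errPList_marginConcept_le hγ f S)

lemma integral_sum_indicator_comp_eval {α : Type*} [MeasurableSpace α] (D : Measure α)
    [IsProbabilityMeasure D] {B : Set α} (hB : MeasurableSet B) (n : ℕ) :
    ∫ S, ∑ i : Fin n, B.indicator 1 (S i) ∂(Measure.pi fun _ : Fin n => D) = n * D.real B := by
  have hint : Integrable (B.indicator (1 : α → ℝ)) D := (integrable_const 1).indicator hB
  calc ∫ S, ∑ i : Fin n, B.indicator 1 (S i) ∂(Measure.pi fun _ : Fin n => D)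
      = ∑ _i : Fin n, ∫ x, B.indicator 1 x ∂D := by
        rw [integral_finsetSum _ fun i _ => integrable_comp_eval (μ := fun _ => D) hint]
        exact Finset.sum_congr rfl fun i _ =>
          integral_comp_eval (μ := fun _ => D) hint.aestronglyMeasurable
    _ = n * D.real B := by simp [hB]

lemma errMarginList_ofFn_le {γ : ℝ} {f : X → ℝ} {B : Set (X × Bool)}
    (hB : {p | ssign p.2 * f p.1 < γ} ⊆ B) {n : ℕ} (S : Fin n → X × Bool) :
    errMarginList γ f (List.ofFn S) ≤ (∑ i, B.indicator 1 (S i)) / n := by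
  simp only [errMarginList, List.map_ofFn, List.sum_ofFn, List.length_ofFn, Function.comp_def]
  refine div_le_div_of_nonneg_right (Finset.sum_le_sum fun i _ => ?_) (Nat.cast_nonneg _)
  split_ifs with hi
  · simp [Set.indicator_of_mem (hB hi)]
  · exact Set.indicator_nonneg (fun _ _ => zero_le_one) _

/-- Since `f` need not be measurable, the margin-error set is replaced by a measurable hull of
the same measure. -/
lemma errStar_le_errMarginD [MeasurableSpace X] {H : Set (X → Option Bool)} {γ : ℝ}
    {f : X → ℝ} (hH : ∀ S, errClassList H S ≤ errMarginList γ f S) (D : Measure (X × Bool))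
    [IsProbabilityMeasure D] (n : ℕ) : errStar H D n ≤ errMarginD γ f D := by
  set B := toMeasurable D {p | ssign p.2 * f p.1 < γ}
  have hB : MeasurableSet B := measurableSet_toMeasurable _ _
  have hint : Integrable (fun S : Fin n → X × Bool => (∑ i, B.indicator 1 (S i)) / (n : ℝ))
      (Measure.pi fun _ => D) :=
    (integrable_finsetSum _ fun i _ =>
      integrable_comp_eval (μ := fun _ => D) ((integrable_const (1 : ℝ)).indicator hB)).div_const _
  calc errStar H D n
      ≤ ∫ S, (∑ i, B.indicator 1 (S i)) / (n : ℝ) ∂(Measure.pi fun _ : Fin n => D) :=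
        integral_mono_of_nonneg (ae_of_all _ fun _ => errClassList_nonneg _ _) hint
          (ae_of_all _ fun S => (hH _).trans (errMarginList_ofFn_le (subset_toMeasurable _ _) S))
    _ = n * D.real B / n := by rw [integral_div, integral_sum_indicator_comp_eval D hB]
    _ ≤ D.real B := div_le_of_le_mul₀ (Nat.cast_nonneg _) measureReal_nonneg (mul_comm _ _).le
    _ = errMarginD γ f D := by rw [measureReal_def, measure_toMeasurable]; rfl

/-- (i) `err(F^{0/1}(L/2γ), S) ≤ err^γ(F(L), S)` on every finite sample;
(ii) `err*(F^{0/1}(L/2γ), D, n) ≤ err^γ(F(L), D)` for every `n`, and consequently the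
limit `err*(F^{0/1}(L/2γ), D)`, whenever it exists, is at most `err^γ(F(L), D)`.
(The inequalities against the infimum `err^γ(F(L), ·)` are expressed by quantifying over
all `f ∈ F(L)`.) -/
theorem statement11 (X : Type) [MetricSpace X] [MeasurableSpace X]
    (γ L : ℝ) (hγ : 0 < γ) (hL : 0 < L) (F : Set (X → ℝ)) :
    (∀ S : List (X × Bool), ∀ f ∈ F, LipBound L f →
      errClassList (signClass F γ L) S ≤ errMarginList γ f S) ∧
    (∀ (D : Measure (X × Bool)), IsProbabilityMeasure D →
      (∀ n : ℕ, ∀ f ∈ F, LipBound L f →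
        errStar (signClass F γ L) D n ≤ errMarginD γ f D) ∧
      (∀ l : ℝ,
        Filter.Tendsto (fun n => errStar (signClass F γ L) D n) Filter.atTop (nhds l) →
        ∀ f ∈ F, LipBound L f → l ≤ errMarginD γ f D)) := by
  have empirical : ∀ S : List (X × Bool), ∀ f ∈ F, LipBound L f →
      errClassList (signClass F γ L) S ≤ errMarginList γ f S :=
    fun S f hf hlip => errClassList_signClass_le hγ hL hf hlip S
  have expected (D : Measure (X × Bool)) [IsProbabilityMeasure D] (n : ℕ) (f : X → ℝ)
      (hf : f ∈ F) (hlip : LipBound L f) : errStar (signClass F γ L) D n ≤ errMarginD γ f D :=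
    errStar_le_errMarginD (fun S => empirical S f hf hlip) D n
  refine ⟨empirical, fun D _ => ⟨fun n f hf hlip => expected D n f hf hlip, ?_⟩⟩
  intro l hl f hf hlip
  exact le_of_tendsto' hl fun n => expected D n f hf hlip

end Stmt11
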